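/- Velocity moment contraction in the implicit velocity step: let μ ∈ P₂(ℝ^{2d}) and let μ̄ minimize ν ↦ W_{2,v}²(μ,ν)/(2h) + ℒ_v(ν) + αℋ(ν), and suppose the Euler–Lagrange equation holds: T_{μ̄^x}^{μ^x}(v) = v + h(∇V(x) + ∇W∗Π^xμ(x) + αv + α∇_vρ̄/ρ̄(x,v)). Then (1+2αh)‖v‖²_{L²(μ̄)} ≤ ‖v‖²_{L²(μ)} - 2hℒ_v(μ̄) + 2αdh, using the 2-geodesic-convexity of ν ↦ ‖v‖²_{L²(ν)} along W_{2,v}-geodesics and ∫(v·α∇_vρ̄/ρ̄)dμ̄ = -αd. -/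

import Mathlib

open MeasureTheory Filter ENNReal
open scoped Topology RealInnerProductSpace

noncomputable section

abbrev Euc (d : ℕ) := EuclideanSpace ℝ (Fin d)
abbrev Phase (d : ℕ) := Euc d × Euc d

/-- Couplings (transport plans) between two measures. -/
def couplings {α : Type*} [MeasurableSpace α] (μ ν : Measure α) : Set (Measure (α × α)) :=
  {γ | IsProbabilityMeasure γ ∧ γ.map Prod.fst = μ ∧ γ.map Prod.snd = ν}

/-- Optimal transport cost for a general cost function. -/
def OTCost {α : Type*} [MeasurableSpace α] (c : α → α → ℝ≥0∞) (μ ν : Measure α) : ℝ≥0∞ :=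
  ⨅ γ ∈ couplings μ ν, ∫⁻ p, c p.1 p.2 ∂γ

/-- Squared 2-Wasserstein distance on `Euc d` (quadratic cost). -/
def W2sqFiber {d : ℕ} (μ ν : Measure (Euc d)) : ℝ≥0∞ :=
  OTCost (fun a b => (‖a - b‖₊ : ℝ≥0∞) ^ 2) μ ν

/-- Squared 2-Wasserstein distance on phase space with the Euclidean quadratic cost. -/
def W2sq {d : ℕ} (μ ν : Measure (Phase d)) : ℝ≥0∞ :=
  OTCost (fun a b => (‖a.1 - b.1‖₊ : ℝ≥0∞) ^ 2 + (‖a.2 - b.2‖₊ : ℝ≥0∞) ^ 2) μ ν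

/-- 2-Wasserstein distance on phase space. -/
def W2 {d : ℕ} (μ ν : Measure (Phase d)) : ℝ≥0∞ := W2sq μ ν ^ (1/2 : ℝ)

open Classical in
/-- Squared fibered Wasserstein distance `W_{2,v}²`: for measures with equal position
marginals, disintegrate w.r.t. the first (position) marginal and integrate the squared
Wasserstein distances of the conditional (velocity) measures; `+∞` otherwise. -/
def W2vSq {d : ℕ} (μ ν : ProbabilityMeasure (Phase d)) : ℝ≥0∞ :=
  if (μ : Measure (Phase d)).fst = (ν : Measure (Phase d)).fst then
    ∫⁻ x, W2sqFiber ((μ : Measure (Phase d)).condKernel x)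
      ((ν : Measure (Phase d)).condKernel x) ∂(μ : Measure (Phase d)).fst
  else ⊤

/-- The fibered Wasserstein distance `W_{2,v}`. -/
def W2v {d : ℕ} (μ ν : ProbabilityMeasure (Phase d)) : ℝ≥0∞ := W2vSq μ ν ^ (1/2 : ℝ)

/-- Finite second moment. -/
def Fin2M {d : ℕ} (μ : Measure (Phase d)) : Prop :=
  ∫⁻ z, ((‖z.1‖₊ : ℝ≥0∞) ^ 2 + (‖z.2‖₊ : ℝ≥0∞) ^ 2) ∂μ < ⊤

open Classical in
/-- The entropy functional `U(ν) = ∫ ρ log ρ` for `ν = ρ·Leb` (with value `+∞` when `ν` is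
not absolutely continuous or the positive part diverges). -/
def Ent {d : ℕ} (ν : Measure (Phase d)) : EReal :=
  if ν ≪ (volume : Measure (Phase d)) ∧
      Integrable (fun z => (ν.rnDeriv volume z).toReal * Real.log (ν.rnDeriv volume z).toReal)
        (volume : Measure (Phase d)) then
    ((∫ z, (ν.rnDeriv volume z).toReal * Real.log (ν.rnDeriv volume z).toReal
        ∂(volume : Measure (Phase d)) : ℝ) : EReal)
  else ⊤

/-- The Hamiltonian functional `ℋ = 𝒱 + 𝒲 + 𝒰`. -/
def Hfun {d : ℕ} (V W : Euc d → ℝ) (ν : Measure (Phase d)) : EReal :=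
  ((∫ z, (V z.1 + ‖z.2‖ ^ 2 / 2) ∂ν : ℝ) : EReal)
    + (((1 / 2) * ∫ z, ∫ y, W (z.1 - y.1) ∂ν ∂ν : ℝ) : EReal)
    + Ent ν

/-- The linear functional `ℒ_v(ν) = ∫ v·(∇V(x) + (∇W ∗ Π^x ν)(x)) dν(x,v)`. -/
def Lv {d : ℕ} (gradV gradW : Euc d → Euc d) (ν : Measure (Phase d)) : ℝ :=
  ∫ z, ⟪z.2, gradV z.1 + ∫ y, gradW (z.1 - y.1) ∂ν⟫ ∂ν

open Classical in
/-- Squared fibered Wasserstein distance `W_{2,x}²` (fixed velocity marginals). -/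
def W2xSq {d : ℕ} (μ ν : ProbabilityMeasure (Phase d)) : ℝ≥0∞ :=
  if (μ : Measure (Phase d)).snd = (ν : Measure (Phase d)).snd then
    ∫⁻ v, W2sqFiber
      (((μ.map measurable_swap.aemeasurable : ProbabilityMeasure (Phase d))
        : Measure (Phase d)).condKernel v)
      (((ν.map measurable_swap.aemeasurable : ProbabilityMeasure (Phase d))
        : Measure (Phase d)).condKernel v) ∂(μ : Measure (Phase d)).snd
  else ⊤

/-- The linear functional `ℒ_x(ν) = ∫ x·v dν(x,v)`. -/
def Lx {d : ℕ} (ν : Measure (Phase d)) : ℝ := ∫ z, ⟪z.1, z.2⟫ ∂ν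

/-- The objective of the implicit velocity step:
`ν ↦ W_{2,v}²(μ,ν)/(2h) + ℒ_v(ν) + αℋ(ν)`. -/
def velFunctional {d : ℕ} (hstep α : ℝ) (V W : Euc d → ℝ) (gradV gradW : Euc d → Euc d)
    (μ ν : ProbabilityMeasure (Phase d)) : EReal :=
  ((W2vSq μ ν / ENNReal.ofReal (2 * hstep) : ℝ≥0∞) : EReal)
    + ((Lv gradV gradW (ν : Measure (Phase d)) : ℝ) : EReal)
    + (α : EReal) * Hfun V W (ν : Measure (Phase d))

/-- The objective of the explicit position step: `ν ↦ W_{2,x}²(μ,ν)/(2h) - ℒ_x(ν)`. -/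
def posFunctional {d : ℕ} (hstep : ℝ) (μ ν : ProbabilityMeasure (Phase d)) : EReal :=
  ((W2xSq μ ν / ENNReal.ofReal (2 * hstep) : ℝ≥0∞) : EReal)
    - ((Lx (ν : Measure (Phase d)) : ℝ) : EReal)

/-- `μ'` solves the implicit velocity step of the coordinate-wise minimizing movement
scheme started at `μ`. -/
def IsVelStep {d : ℕ} (hstep α : ℝ) (V W : Euc d → ℝ) (gradV gradW : Euc d → Euc d)
    (μ μ' : ProbabilityMeasure (Phase d)) : Prop :=
  Fin2M (μ' : Measure (Phase d)) ∧
  ∀ ν : ProbabilityMeasure (Phase d), Fin2M (ν : Measure (Phase d)) →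
    velFunctional hstep α V W gradV gradW μ μ'
      ≤ velFunctional hstep α V W gradV gradW μ ν

/-- `μ''` solves the position step of the coordinate-wise minimizing movement scheme
started at `μ'`. -/
def IsPosStep {d : ℕ} (hstep : ℝ) (μ' μ'' : ProbabilityMeasure (Phase d)) : Prop :=
  Fin2M (μ'' : Measure (Phase d)) ∧
  ∀ ν : ProbabilityMeasure (Phase d), Fin2M (ν : Measure (Phase d)) →
    posFunctional hstep μ' μ'' ≤ posFunctional hstep μ' ν

lemma aesm_of_comp_fst {d : ℕ} (ρ : Measure (Phase d)) [IsFiniteMeasure ρ] (f : Euc d → Euc d)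
    (h : AEStronglyMeasurable (fun z : Phase d => f z.1) ρ) :
    AEStronglyMeasurable f ρ.fst := by
  obtain ⟨F, hF, hae⟩ := h
  refine ⟨fun x => ∫ y, F (x, y) ∂ρ.condKernel x, hF.integral_kernel_prod_right', ?_⟩
  have h2 : ∀ᵐ x ∂ρ.fst, ∀ᵐ y ∂ρ.condKernel x, f x = F (x, y) := by
    rw [← Measure.disintegrate ρ ρ.condKernel] at hae
    exact Measure.ae_ae_of_ae_compProd hae
  filter_upwards [h2] with x hx
  calc f x = ∫ y, f x ∂ρ.condKernel x := by simp
    _ = ∫ y, F (x, y) ∂ρ.condKernel x := integral_congr_ae hx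

lemma integral_comp_fst {d : ℕ} (ρ : Measure (Phase d)) [IsProbabilityMeasure ρ]
    (f : Euc d → Euc d) : ∫ z, f z.1 ∂ρ = ∫ x, f x ∂ρ.fst := by
  by_cases h : AEStronglyMeasurable f ρ.fst
  · rw [Measure.fst, integral_map measurable_fst.aemeasurable (by rwa [← Measure.fst])]
  · rw [integral_non_aestronglyMeasurable h,
      integral_non_aestronglyMeasurable (fun hc => h (aesm_of_comp_fst ρ f hc))]

lemma integrable_inner_of_memℒp {α : Type*} [MeasurableSpace α] {μ : Measure α} {d : ℕ}
    {f g : α → Euc d} (hf : MemLp f 2 μ) (hg : MemLp g 2 μ) :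
    Integrable (fun x => ⟪f x, g x⟫) μ := by
  have := L2.integrable_inner (𝕜 := ℝ) (hf.toLp f) (hg.toLp g)
  refine this.congr ?_
  filter_upwards [hf.coeFn_toLp, hg.coeFn_toLp] with x h1 h2
  rw [h1, h2]

lemma memℒp_two_of_lintegral {α : Type*} [MeasurableSpace α] {μ : Measure α} {d : ℕ}
    {f : α → Euc d} (hf : AEStronglyMeasurable f μ)
    (h : ∫⁻ x, (‖f x‖₊ : ℝ≥0∞) ^ 2 ∂μ < ⊤) : MemLp f 2 μ := by
  refine ⟨hf, ?_⟩
  rw [eLpNorm_eq_lintegral_rpow_enorm_toReal two_ne_zero ENNReal.ofNat_ne_top]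
  refine ENNReal.rpow_lt_top_of_nonneg (by norm_num) ?_
  simpa [ENNReal.rpow_two, ENNReal.toReal_ofNat, enorm_eq_nnnorm] using h.ne


/-- **Velocity-moment contraction in the implicit velocity step.**  Let `μ̄` minimize
`ν ↦ W_{2,v}²(μ,ν)/(2h) + ℒ_v(ν) + αℋ(ν)`, and suppose the Euler–Lagrange equation
`T_{μ̄^x}^{μ^x}(v) = v + h(∇V(x) + (∇W ∗ Π^xμ)(x) + αv + α ∇_v ρ̄/ρ̄ (x,v))` holds, where
`T` is the (velocity component of the) fibered optimal transport map from `μ̄` to `μ` and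
`w = ∇_v ρ̄/ρ̄` satisfies `∫ v·w dμ̄ = -d` (integration by parts).  Then
`(1 + 2αh) ‖v‖²_{L²(μ̄)} ≤ ‖v‖²_{L²(μ)} - 2h ℒ_v(μ̄) + 2αdh`. -/
theorem velocity_moment_contraction {d : ℕ} (V W : Euc d → ℝ)
    (gradV gradW : Euc d → Euc d) (α hstep : ℝ) (hα : 0 < α) (hh : 0 < hstep)
    (μ μbar : ProbabilityMeasure (Phase d))
    (hμ2 : Fin2M (μ : Measure (Phase d))) (hμbar2 : Fin2M (μbar : Measure (Phase d)))
    (hmarg : (μbar : Measure (Phase d)).fst = (μ : Measure (Phase d)).fst)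
    (hmin : IsVelStep hstep α V W gradV gradW μ μbar)
    (w : Phase d → Euc d) (hw : MemLp w 2 (μbar : Measure (Phase d)))
    (hwlog : ∫ z, ⟪z.2, w z⟫ ∂(μbar : Measure (Phase d)) = -(d : ℝ))
    (T : Phase d → Euc d)
    (hTmeas : AEMeasurable T (μbar : Measure (Phase d)))
    (hTpush : (μbar : Measure (Phase d)).map (fun z : Phase d => (z.1, T z))
      = (μ : Measure (Phase d)))
    (hTopt : ∫⁻ z, (‖T z - z.2‖₊ : ℝ≥0∞) ^ 2 ∂(μbar : Measure (Phase d)) = W2vSq μbar μ)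
    (hEL : ∀ᵐ z ∂(μbar : Measure (Phase d)),
      T z = z.2 + hstep • (gradV z.1 + (∫ y, gradW (z.1 - y.1) ∂(μ : Measure (Phase d)))
        + α • z.2 + α • w z)) :
    (1 + 2 * α * hstep) * ∫ z, ‖z.2‖ ^ 2 ∂(μbar : Measure (Phase d))
      ≤ (∫ z, ‖z.2‖ ^ 2 ∂(μ : Measure (Phase d)))
        - 2 * hstep * Lv gradV gradW (μbar : Measure (Phase d))
        + 2 * α * d * hstep := by
  set ρ : Measure (Phase d) := (μ : Measure (Phase d)) with hρ
  set ρb : Measure (Phase d) := (μbar : Measure (Phase d)) with hρb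
  have hφ : AEMeasurable (fun z : Phase d => (z.1, T z)) ρb :=
    measurable_fst.aemeasurable.prodMk hTmeas
  -- second moments
  have hvfin : ∫⁻ z, (‖z.2‖₊ : ℝ≥0∞) ^ 2 ∂ρb < ⊤ :=
    lt_of_le_of_lt (lintegral_mono fun z => le_add_self) hμbar2
  have hvfinρ : ∫⁻ z, (‖z.2‖₊ : ℝ≥0∞) ^ 2 ∂ρ < ⊤ :=
    lt_of_le_of_lt (lintegral_mono fun z => le_add_self) hμ2
  have hv2 : MemLp (fun z : Phase d => z.2) 2 ρb :=
    memℒp_two_of_lintegral measurable_snd.aestronglyMeasurable hvfin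
  have hTlint : ∫⁻ z, (‖T z‖₊ : ℝ≥0∞) ^ 2 ∂ρb = ∫⁻ z, (‖z.2‖₊ : ℝ≥0∞) ^ 2 ∂ρ := by
    rw [← hTpush, lintegral_map' (((measurable_snd.nnnorm).coe_nnreal_ennreal.pow_const 2).aemeasurable) hφ]
  have hT2 : MemLp T 2 ρb :=
    memℒp_two_of_lintegral hTmeas.aestronglyMeasurable (hTlint ▸ hvfinρ)
  set g : Phase d → Euc d := fun z => T z - z.2 with hgdef
  have hg2 : MemLp g 2 ρb := hT2.sub hv2
  -- pushforward of the real integral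
  have hI1 : ∫ z, ‖z.2‖ ^ 2 ∂ρ = ∫ z, ‖T z‖ ^ 2 ∂ρb := by
    rw [← hTpush, integral_map hφ ((measurable_snd.norm.pow_const 2).aestronglyMeasurable)]
  -- integrabilities
  have intv : Integrable (fun z => ‖z.2‖ ^ 2) ρb :=
    (memLp_two_iff_integrable_sq_norm hv2.1).mp hv2
  have intg : Integrable (fun z => ‖g z‖ ^ 2) ρb :=
    (memLp_two_iff_integrable_sq_norm hg2.1).mp hg2
  have int_vg : Integrable (fun z => ⟪z.2, g z⟫) ρb := integrable_inner_of_memℒp hv2 hg2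
  have int_vw : Integrable (fun z => ⟪z.2, w z⟫) ρb := integrable_inner_of_memℒp hv2 hw
  -- expansion
  have hexp : ∫ z, ‖T z‖ ^ 2 ∂ρb
      = (∫ z, ‖z.2‖ ^ 2 ∂ρb) + 2 * (∫ z, ⟪z.2, g z⟫ ∂ρb) + ∫ z, ‖g z‖ ^ 2 ∂ρb := by
    have hpt : ∀ z : Phase d, ‖T z‖ ^ 2 = ‖z.2‖ ^ 2 + 2 * ⟪z.2, g z⟫ + ‖g z‖ ^ 2 := by
      intro z
      have : T z = z.2 + g z := by simp [hgdef]
      rw [this, norm_add_sq_real]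
    have i2 : Integrable (fun z : Phase d => 2 * ⟪z.2, g z⟫) ρb := int_vg.const_mul 2
    have i12 : Integrable (fun z : Phase d => ‖z.2‖ ^ 2 + 2 * ⟪z.2, g z⟫) ρb := intv.add i2
    simp_rw [hpt]
    rw [integral_add i12 intg, integral_add intv i2, integral_const_mul]
  have hgnn : 0 ≤ ∫ z, ‖g z‖ ^ 2 ∂ρb := integral_nonneg fun z => sq_nonneg _
  -- convolution marginal swap
  have hconv : ∀ x : Euc d,
      (∫ y, gradW (x - y.1) ∂ρ) = ∫ y, gradW (x - y.1) ∂ρb := by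
    intro x
    rw [integral_comp_fst ρ (fun u => gradW (x - u)),
      integral_comp_fst ρb (fun u => gradW (x - u)), hmarg]
  set q : Phase d → ℝ :=
    fun z => ⟪z.2, gradV z.1 + ∫ y, gradW (z.1 - y.1) ∂ρb⟫ with hqdef
  have hLv : Lv gradV gradW ρb = ∫ z, q z ∂ρb := rfl
  -- Euler–Lagrange rewriting
  have hEL' : ∀ᵐ z ∂ρb,
      q z = hstep⁻¹ * ⟪z.2, g z⟫ - α * ‖z.2‖ ^ 2 - α * ⟪z.2, w z⟫ := by
    filter_upwards [hEL] with z hz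
    have hgz : g z = hstep • (gradV z.1 + (∫ y, gradW (z.1 - y.1) ∂ρ)
        + α • z.2 + α • w z) := by
      rw [hgdef]; simp only; rw [hz]; abel
    have hA : gradV z.1 + (∫ y, gradW (z.1 - y.1) ∂ρb)
        = hstep⁻¹ • g z - α • z.2 - α • w z := by
      rw [← hconv z.1, hgz, smul_smul, inv_mul_cancel₀ hh.ne', one_smul]
      abel
    rw [hqdef]; simp only
    rw [hA, inner_sub_right, inner_sub_right, real_inner_smul_right,
      real_inner_smul_right, real_inner_smul_right, real_inner_self_eq_norm_sq]
  have j1 : Integrable (fun z : Phase d => hstep⁻¹ * ⟪z.2, g z⟫) ρb := int_vg.const_mul _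
  have j2 : Integrable (fun z : Phase d => α * ‖z.2‖ ^ 2) ρb := intv.const_mul _
  have j3 : Integrable (fun z : Phase d => α * ⟪z.2, w z⟫) ρb := int_vw.const_mul _
  have j12 : Integrable (fun z : Phase d => hstep⁻¹ * ⟪z.2, g z⟫ - α * ‖z.2‖ ^ 2) ρb := j1.sub j2
  have hq : ∫ z, q z ∂ρb
      = hstep⁻¹ * (∫ z, ⟪z.2, g z⟫ ∂ρb) - α * (∫ z, ‖z.2‖ ^ 2 ∂ρb)
        - α * (-(d : ℝ)) := by
    rw [integral_congr_ae hEL', integral_sub j12 j3, integral_sub j1 j2,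
      integral_const_mul, integral_const_mul, integral_const_mul, hwlog]
  -- assemble
  set M : ℝ := ∫ z, ‖z.2‖ ^ 2 ∂ρb
  set S : ℝ := ∫ z, ‖z.2‖ ^ 2 ∂ρ
  set X : ℝ := ∫ z, ⟪z.2, g z⟫ ∂ρb
  set Q : ℝ := ∫ z, q z ∂ρb
  have hX : X = hstep * (Q + α * M - α * d) := by
    field_simp at hq
    nlinarith [hq]
  have key : S ≥ M + 2 * X := by
    rw [hI1] at *
    linarith [hexp, hgnn]
  rw [hLv]
  nlinarith [key, hX]
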